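/- The forgetful functor U : Frob_R → Mod_R, (M, κ) ↦ M, admits a left adjoint L; moreover, for every R-module M the underlying R-module of L(M) is naturally isomorphic to the direct sum ⨁_{n∈ℕ} (F*)ⁿ(M), where F*(N) = R ⊗_{F,R} N denotes extension of scalars along the Frobenius endomorphism F of R. -/

import Mathlib

/-!
STATEMENT 2: For a commutative ring `R` of prime characteristic `p`, the forgetful
functor `U : Frob_R → Mod_R`, `(M, κ) ↦ M`, admits a left adjoint `L`, and the
underlying `R`-module of `L M` is naturally isomorphic to `⨁_{n ∈ ℕ} (F_*)ⁿ M`,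
where `F_* N = R ⊗_{F, R} N` is extension of scalars along the Frobenius `F` of `R`.
-/

open CategoryTheory CategoryTheory.Limits

set_option linter.unusedSectionVars false

universe u

variable (p : ℕ) (R : Type u) [CommRing R] [Fact p.Prime] [CharP R p]

/-- A Frobenius module over `R`: an `R`-module `M` together with an additive map
`κ : M → M` that is semilinear along the Frobenius, i.e. `κ (r • m) = r ^ p • κ m`. -/
structure FrobModule where
  /-- the underlying type -/
  carrier : Type u
  [isAddCommGroup : AddCommGroup carrier]
  [isModule : Module R carrier]
  /-- the Frobenius-semilinear structure map -/
  κ : carrier →+ carrier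
  κ_smul : ∀ (r : R) (m : carrier), κ (r • m) = r ^ p • κ m

attribute [instance] FrobModule.isAddCommGroup FrobModule.isModule

namespace FrobModule

variable {p R}

/-- Morphisms of Frobenius modules: `R`-linear maps commuting with the structure maps. -/
@[ext]
structure Hom (M N : FrobModule p R) where
  /-- the underlying `R`-linear map -/
  toLinearMap : M.carrier →ₗ[R] N.carrier
  comm : ∀ m, toLinearMap (M.κ m) = N.κ (toLinearMap m)

instance : Category (FrobModule p R) where
  Hom M N := Hom M N
  id M := ⟨LinearMap.id, fun _ => rfl⟩
  comp f g := ⟨g.toLinearMap.comp f.toLinearMap, fun m => by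
    simp only [LinearMap.comp_apply, f.comm, g.comm]⟩
  id_comp f := by apply Hom.ext; rfl
  comp_id f := by apply Hom.ext; rfl
  assoc f g h := by apply Hom.ext; rfl

variable (p R)

/-- The forgetful functor from Frobenius modules over `R` to `R`-modules. -/
def forget : FrobModule p R ⥤ ModuleCat.{u} R where
  obj M := ModuleCat.of R M.carrier
  map f := ModuleCat.ofHom f.toLinearMap

end FrobModule

/-- The `n`-fold iterate of an endofunctor. -/
def iterateFunctor {C : Type*} [Category C] (H : C ⥤ C) : ℕ → (C ⥤ C)
  | 0 => 𝟭 C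
  | n + 1 => iterateFunctor H n ⋙ H

/-- Extension of scalars along the Frobenius endomorphism of `R`,
`F_* N = R ⊗_{F, R} N`. -/
noncomputable def frobExtendScalars : ModuleCat.{u} R ⥤ ModuleCat.{u} R :=
  ModuleCat.extendScalars (frobenius R p)

/-- The functor `M ↦ ⨁_{n ∈ ℕ} (F_*)ⁿ M` on `R`-modules. -/
noncomputable def sigmaFrobExtend : ModuleCat.{u} R ⥤ ModuleCat.{u} R where
  obj M := ∐ fun n : ℕ => (iterateFunctor (frobExtendScalars p R) n).obj M
  map g := Limits.Sigma.map fun n => (iterateFunctor (frobExtendScalars p R) n).map g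
  map_id M := by ext n; simp
  map_comp g₁ g₂ := by ext n; simp

/-!
A Frobenius structure `κ` on `M` is the same as an `R`-linear map from `M` to its restriction of
scalars along the Frobenius, so `FrobModule p R` is the category of coalgebras of that endofunctor,
whose left adjoint is extension of scalars `F^*`. For any adjunction `F ⊣ G` of endofunctors the
free `G`-coalgebra on `X` is `∐ₙ Fⁿ X`, with structure map the adjunct of the shift
`Fⁿ⁺¹ X ⟶ ∐ₙ Fⁿ X` on the `n`-th summand. A coalgebra morphism out of it is determined by its
restriction `f₀` to `X`: its `(n+1)`-st component is forced to be the adjunct of `fₙ ≫ a`, where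
`a` is the structure map of the target.
-/

open CategoryTheory.Endofunctor

noncomputable section

namespace CategoryTheory.Adjunction

variable {C : Type*} [Category C] {F G : C ⥤ C} (adj : F ⊣ G) [HasCoproductsOfShape ℕ C]

-- reducible, so that `rw` and `simp` see the carrier as a coproduct
abbrev freeCoalgebra (X : C) : Coalgebra G where
  V := ∐ fun n => (iterateFunctor F n).obj X
  str := Limits.Sigma.desc fun n =>
    adj.homEquiv _ _ (Limits.Sigma.ι (fun n => (iterateFunctor F n).obj X) (n + 1))

def freeCoalgebraι (X : C) : X ⟶ (adj.freeCoalgebra X).V :=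
  Limits.Sigma.ι (fun n => (iterateFunctor F n).obj X) 0

/- The `(n+1)`-st inclusion, with its source written as `F.obj (Fⁿ X)`: this agrees with
`(iterateFunctor F (n + 1)).obj X` only up to unfolding, which `rw` does not do. -/
def freeCoalgebraιSucc (X : C) (n : ℕ) :
    F.obj ((iterateFunctor F n).obj X) ⟶ (adj.freeCoalgebra X).V :=
  Limits.Sigma.ι (fun n => (iterateFunctor F n).obj X) (n + 1)

lemma ι_freeCoalgebra_str (X : C) (n : ℕ) :
    Limits.Sigma.ι _ n ≫ (adj.freeCoalgebra X).str =
      adj.homEquiv _ _ (adj.freeCoalgebraιSucc X n) :=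
  Limits.Sigma.ι_desc _ _

lemma ι_freeCoalgebra_str_comp (X : C) (n : ℕ) {Y : C} (g : (adj.freeCoalgebra X).V ⟶ Y) :
    Limits.Sigma.ι _ n ≫ (adj.freeCoalgebra X).str ≫ G.map g =
      adj.homEquiv _ _ (adj.freeCoalgebraιSucc X n ≫ g) := by
  rw [homEquiv_naturality_right, reassoc_of% ι_freeCoalgebra_str]

lemma freeCoalgebraιSucc_map {X Y : C} (g : X ⟶ Y) (n : ℕ) :
    adj.freeCoalgebraιSucc X n ≫ Limits.Sigma.map (fun n => (iterateFunctor F n).map g) =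
      F.map ((iterateFunctor F n).map g) ≫ adj.freeCoalgebraιSucc Y n :=
  Limits.Sigma.ι_map _ _

lemma freeCoalgebraιSucc_desc (X : C) (n : ℕ) {Y : C} (g : ∀ n, (iterateFunctor F n).obj X ⟶ Y) :
    adj.freeCoalgebraιSucc X n ≫ Limits.Sigma.desc g = g (n + 1) :=
  Limits.Sigma.ι_desc _ _

def freeCoalgebraFunctor : C ⥤ Coalgebra G where
  obj := adj.freeCoalgebra
  map g :=
    { f := Limits.Sigma.map fun n => (iterateFunctor F n).map g
      h := Limits.Sigma.hom_ext _ _ fun n => by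
        rw [ι_freeCoalgebra_str_comp, freeCoalgebraιSucc_map, Limits.Sigma.ι_map_assoc,
          homEquiv_naturality_left, ι_freeCoalgebra_str] }
  map_id X := Coalgebra.Hom.ext <| Limits.Sigma.hom_ext _ _ fun n => by simp
  map_comp g₁ g₂ := Coalgebra.Hom.ext <| Limits.Sigma.hom_ext _ _ fun n => by simp

def freeCoalgebraDescComponent {X : C} {A : Coalgebra G} (f : X ⟶ A.V) :
    ∀ n, (iterateFunctor F n).obj X ⟶ A.V
  | 0 => f
  | n + 1 => (adj.homEquiv _ _).symm (freeCoalgebraDescComponent f n ≫ A.str)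

lemma homEquiv_freeCoalgebraDescComponent_succ {X : C} {A : Coalgebra G} (f : X ⟶ A.V) (n : ℕ) :
    adj.homEquiv _ _ (adj.freeCoalgebraDescComponent f (n + 1)) =
      adj.freeCoalgebraDescComponent f n ≫ A.str :=
  (adj.homEquiv _ _).apply_symm_apply _

def freeCoalgebraDesc {X : C} {A : Coalgebra G} (f : X ⟶ A.V) : adj.freeCoalgebra X ⟶ A where
  f := Limits.Sigma.desc (adj.freeCoalgebraDescComponent f)
  h := Limits.Sigma.hom_ext _ _ fun n => by
    rw [ι_freeCoalgebra_str_comp, freeCoalgebraιSucc_desc,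
      homEquiv_freeCoalgebraDescComponent_succ, Limits.Sigma.ι_desc_assoc]

lemma freeCoalgebraDescComponent_ι_comp {X : C} {A : Coalgebra G} (g : adj.freeCoalgebra X ⟶ A)
    (n : ℕ) :
    adj.freeCoalgebraDescComponent (adj.freeCoalgebraι X ≫ g.f) n =
      Limits.Sigma.ι _ n ≫ g.f := by
  induction n with
  | zero => rfl
  | succ n ih =>
    rw [freeCoalgebraDescComponent, ih, Category.assoc, ← g.h, ι_freeCoalgebra_str_comp,
      Equiv.symm_apply_apply]
    rfl

def freeCoalgebraHomEquiv (X : C) (A : Coalgebra G) :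
    (adj.freeCoalgebraFunctor.obj X ⟶ A) ≃ (X ⟶ (Coalgebra.forget G).obj A) where
  toFun g := adj.freeCoalgebraι X ≫ g.f
  invFun := adj.freeCoalgebraDesc
  left_inv g := Coalgebra.Hom.ext <| Limits.Sigma.hom_ext _ _ fun n =>
    (Limits.Sigma.ι_desc _ _).trans (adj.freeCoalgebraDescComponent_ι_comp g n)
  right_inv _ := Limits.Sigma.ι_desc _ _

lemma freeCoalgebraHomEquiv_map_comp {X' X : C} {A : Coalgebra G} (g : X' ⟶ X)
    (h : adj.freeCoalgebraFunctor.obj X ⟶ A) :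
    adj.freeCoalgebraHomEquiv X' A (adj.freeCoalgebraFunctor.map g ≫ h) =
      g ≫ adj.freeCoalgebraHomEquiv X A h :=
  Limits.Sigma.ι_map_assoc (fun n => (iterateFunctor F n).map g) 0 h.f

def freeCoalgebraAdjunction : adj.freeCoalgebraFunctor ⊣ Coalgebra.forget G :=
  Adjunction.mkOfHomEquiv
    { homEquiv := adj.freeCoalgebraHomEquiv
      homEquiv_naturality_left_symm g f := (Equiv.symm_apply_eq _).2 <| by
        rw [freeCoalgebraHomEquiv_map_comp, Equiv.apply_symm_apply]
      homEquiv_naturality_right h k := (Category.assoc _ _ _).symm }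

end CategoryTheory.Adjunction

namespace FrobModule

variable {p R}

def κₛₗ (M : FrobModule p R) : M.carrier →ₛₗ[frobenius R p] M.carrier where
  toFun := M.κ
  map_add' := M.κ.map_add
  map_smul' := M.κ_smul

variable (p R)

def toCoalgebra : FrobModule p R ⥤ Coalgebra (ModuleCat.restrictScalars (frobenius R p)) where
  obj M := ⟨ModuleCat.of R M.carrier, ModuleCat.semilinearMapAddEquiv _ _ _ M.κₛₗ⟩
  map f := ⟨ModuleCat.ofHom f.toLinearMap, ModuleCat.hom_ext (LinearMap.ext f.comm)⟩

def ofCoalgebra : Coalgebra (ModuleCat.restrictScalars (frobenius R p)) ⥤ FrobModule p R where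
  obj V := ⟨V.V, V.str.hom.toAddMonoidHom, V.str.hom.map_smul⟩
  map f := ⟨f.f.hom, LinearMap.congr_fun (congrArg ModuleCat.Hom.hom f.h)⟩

def coalgebraEquivalence :
    FrobModule p R ≌ Coalgebra (ModuleCat.restrictScalars (frobenius R p)) where
  functor := toCoalgebra p R
  inverse := ofCoalgebra p R
  unitIso := NatIso.ofComponents fun _ => Iso.refl _
  counitIso := NatIso.ofComponents fun _ => Iso.refl _

end FrobModule

end

theorem frobModule_forget_hasLeftAdjoint :
    ∃ L : ModuleCat.{u} R ⥤ FrobModule p R,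
      Nonempty (L ⊣ FrobModule.forget p R) ∧
      Nonempty (L ⋙ FrobModule.forget p R ≅ sigmaFrobExtend p R) := by
  let e := FrobModule.coalgebraEquivalence p R
  let adj : frobExtendScalars p R ⊣ ModuleCat.restrictScalars (frobenius R p) :=
    ModuleCat.extendRestrictScalarsAdj _
  refine ⟨adj.freeCoalgebraFunctor ⋙ e.inverse, ⟨?_⟩, ⟨NatIso.ofComponents fun _ => Iso.refl _⟩⟩
  exact (adj.freeCoalgebraAdjunction.comp e.symm.toAdjunction).ofNatIsoRight
    (NatIso.ofComponents fun _ => Iso.refl _)
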